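/- Let (U_n) be i.i.d. uniform on [0,1] and let (H_k) be a fixed strictly decreasing sequence in (0,1] with H_0 = 1. Let K_n be the number of indices k ≥ 1 such that the interval [H_k, H_{k-1}) contains at least one of U_1,...,U_n, counted after the record-replacement construction; then deterministically: (i) if the j-th smallest of U_1,...,U_n exceeds H_k, then K_n ≤ j + k; (ii) if the m-th smallest of U_1,...,U_n is below H_k where m = ρ_1 + ... + ρ_k, then K_n ≥ k. -/

import Mathlib

open scoped Classical

/-- One step of the record-replacement construction `(U_n)|_ρ(H_k)`.
State `(k, c)`: entries hitting `[0, H_k)` are currently being replaced by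
`H_{k+1}`, and `c < ρ_{k+1}` such replacements have been made so far. -/
noncomputable def rstep (ρ : ℕ → ℕ) (H : ℕ → ℝ) (s : ℕ × ℕ) (u : ℝ) :
    (ℕ × ℕ) × ℝ :=
  if u < H s.1 then
    (if s.2 + 1 < ρ s.1 then ((s.1, s.2 + 1), H (s.1 + 1))
     else ((s.1 + 1, 0), H (s.1 + 1)))
  else (s, u)

/-- The state of the replacement construction after processing `u 0, …, u (n-1)`. -/
noncomputable def rstateAfter (ρ : ℕ → ℕ) (H : ℕ → ℝ) (u : ℕ → ℝ) : ℕ → ℕ × ℕ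
  | 0 => (0, 0)
  | n + 1 => (rstep ρ H (rstateAfter ρ H u n) (u n)).1

/-- The `n`-th term of the transformed sequence `(U_n)|_ρ(H_k)`. -/
noncomputable def tval (ρ : ℕ → ℕ) (H : ℕ → ℝ) (u : ℕ → ℝ) (n : ℕ) : ℝ :=
  (rstep ρ H (rstateAfter ρ H u n) (u n)).2

/-- `K_n`: the number of intervals `[H_k, H_{k-1})`, `k ≥ 1`, discovered by the
first `n` terms of the transformed sequence. -/
noncomputable def Kcount (ρ : ℕ → ℕ) (H : ℕ → ℝ) (u : ℕ → ℝ) (n : ℕ) : ℕ :=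
  ((Finset.Icc 1 n).filter fun k =>
    ∃ i ∈ Finset.range n, H k ≤ tval ρ H u i ∧ tval ρ H u i < H (k - 1)).card

section aux
variable (ρ : ℕ → ℕ) (H : ℕ → ℝ) (u : ℕ → ℝ)

lemma tval_eq (n : ℕ) :
    tval ρ H u n =
      if u n < H (rstateAfter ρ H u n).1 then H ((rstateAfter ρ H u n).1 + 1)
      else u n := by
  unfold tval rstep
  rcases lt_or_ge (u n) (H (rstateAfter ρ H u n).1) with h | h
  · rw [if_pos h, if_pos h]
    split <;> rfl
  · rw [if_neg (not_lt.2 h), if_neg (not_lt.2 h)]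

lemma rstate_succ (n : ℕ) :
    rstateAfter ρ H u (n + 1) =
      if u n < H (rstateAfter ρ H u n).1 then
        (if (rstateAfter ρ H u n).2 + 1 < ρ (rstateAfter ρ H u n).1 then
          ((rstateAfter ρ H u n).1, (rstateAfter ρ H u n).2 + 1)
        else ((rstateAfter ρ H u n).1 + 1, 0))
      else rstateAfter ρ H u n := by
  show (rstep _ _ _ _).1 = _
  unfold rstep
  split
  · split <;> rfl
  · rfl

lemma snd_lt (hρ : ∀ k, 1 ≤ ρ k) (n : ℕ) :
    (rstateAfter ρ H u n).2 < ρ (rstateAfter ρ H u n).1 := by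
  induction n with
  | zero => simpa [rstateAfter] using Nat.lt_of_lt_of_le Nat.zero_lt_one (hρ 0)
  | succ n ih =>
    rw [rstate_succ]
    split
    · split
      · simpa using ‹_›
      · exact Nat.lt_of_lt_of_le Nat.zero_lt_one (hρ _)
    · exact ih

lemma fst_le_succ (n : ℕ) :
    (rstateAfter ρ H u n).1 ≤ (rstateAfter ρ H u (n + 1)).1 ∧
      (rstateAfter ρ H u (n + 1)).1 ≤ (rstateAfter ρ H u n).1 + 1 := by
  rw [rstate_succ]
  split
  · split <;> simp
  · simp

lemma fst_mono : Monotone fun n => (rstateAfter ρ H u n).1 :=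
  monotone_nat_of_le_succ fun n => (fst_le_succ ρ H u n).1

lemma fst_le (n : ℕ) : (rstateAfter ρ H u n).1 ≤ n := by
  induction n with
  | zero => simp [rstateAfter]
  | succ n ih => exact le_trans (fst_le_succ ρ H u n).2 (by omega)

lemma repl_count (hρ : ∀ k, 1 ≤ ρ k) (n : ℕ) :
    ((Finset.range n).filter fun i => u i < H (rstateAfter ρ H u i).1).card
      = ∑ l ∈ Finset.range (rstateAfter ρ H u n).1, ρ l
          + (rstateAfter ρ H u n).2 := by
  induction n with
  | zero => simp [rstateAfter]
  | succ n ih =>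
    rw [Finset.range_add_one, Finset.filter_insert]
    rcases lt_or_ge (u n) (H (rstateAfter ρ H u n).1) with h | h
    · rw [if_pos h, Finset.card_insert_of_notMem (by simp)]
      rw [rstate_succ, if_pos h]
      rcases lt_or_ge ((rstateAfter ρ H u n).2 + 1) (ρ (rstateAfter ρ H u n).1)
        with h2 | h2
      · rw [if_pos h2]; simp [ih]; omega
      · rw [if_neg (not_lt.2 h2)]
        have := snd_lt ρ H u hρ n
        simp [Finset.sum_range_succ, ih]
        omega
    · rw [if_neg (not_lt.2 h), rstate_succ, if_neg (not_lt.2 h), ih]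

lemma reach (n m : ℕ) (hm1 : 1 ≤ m) (hm : m ≤ (rstateAfter ρ H u n).1) :
    ∃ i < n, (rstateAfter ρ H u i).1 + 1 = m ∧ u i < H (rstateAfter ρ H u i).1 := by
  induction n with
  | zero => simp [rstateAfter] at hm; omega
  | succ n ih =>
    rcases le_or_gt m (rstateAfter ρ H u n).1 with h | h
    · obtain ⟨i, hi, h1, h2⟩ := ih h
      exact ⟨i, by omega, h1, h2⟩
    · -- m = κ n + 1 = κ (n+1), step n is the transition
      have h2 := (fst_le_succ ρ H u n).2
      have hm' : m = (rstateAfter ρ H u n).1 + 1 := by omega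
      refine ⟨n, by omega, hm'.symm, ?_⟩
      by_contra hc
      rw [rstate_succ, if_neg hc] at hm
      omega

end aux

/-- Deterministic sandwich bounds for the number of discovered intervals:
(i) if the `j`-th smallest of `u 0,…,u (n-1)` exceeds `H k` (i.e. fewer than `j`
of them are `≤ H k`) then `K_n ≤ j + k`; (ii) if the `(ρ_1+⋯+ρ_k)`-th smallest
is below `H k` (i.e. at least `ρ_1+⋯+ρ_k` of them are `< H k`) then `K_n ≥ k`. -/
theorem Kcount_sandwich (ρ : ℕ → ℕ) (hρ : ∀ k, 1 ≤ ρ k) (H : ℕ → ℝ)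
    (hH0 : H 0 = 1) (hanti : StrictAnti H) (hpos : ∀ k, 0 < H k)
    (u : ℕ → ℝ) (hu : ∀ i, u i ∈ Set.Ico (0 : ℝ) 1) (n : ℕ) :
    (∀ j k : ℕ, ((Finset.range n).filter fun i => u i ≤ H k).card < j →
        Kcount ρ H u n ≤ j + k) ∧
    (∀ k : ℕ, (∑ i ∈ Finset.range k, ρ i) ≤
        ((Finset.range n).filter fun i => u i < H k).card →
      k ≤ Kcount ρ H u n) := by
  have key : ∀ i K, tval ρ H u i < H K → u i ≤ H K := by
    intro i K h
    rw [tval_eq] at h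
    split at h
    · have hK : K ≤ (rstateAfter ρ H u i).1 := by
        have := hanti.lt_iff_gt.mp h
        omega
      exact le_of_lt (lt_of_lt_of_le ‹u i < _› (hanti.antitone hK))
    · exact le_of_lt h
  constructor
  · -- upper bound
    intro j k hjk
    set P : ℕ → Prop := fun m =>
      ∃ i ∈ Finset.range n, H m ≤ tval ρ H u i ∧ tval ρ H u i < H (m - 1) with hP
    set F := (Finset.Icc 1 n).filter P with hFdef
    have hK : Kcount ρ H u n = F.card := rfl
    have split_card := Finset.card_filter_add_card_filter_not
      (s := F) (p := fun m => m ≤ k)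
    have h1 : (F.filter (fun m => m ≤ k)).card ≤ k := by
      have hsub : F.filter (fun m => m ≤ k) ⊆ Finset.Icc 1 k := by
        intro m hm
        simp only [hFdef, Finset.mem_filter, Finset.mem_Icc] at hm ⊢
        omega
      calc _ ≤ (Finset.Icc 1 k).card := Finset.card_le_card hsub
        _ = k := by simp
    have h2 : (F.filter (fun m => ¬ m ≤ k)).card ≤
        ((Finset.range n).filter fun i => u i ≤ H k).card := by
      apply Finset.card_le_card_of_injOn (fun m =>
        if h : ∃ i ∈ Finset.range n, H m ≤ tval ρ H u i ∧ tval ρ H u i < H (m - 1)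
        then h.choose else 0)
      · intro m hm
        simp only [hFdef, hP, Finset.mem_coe, Finset.mem_filter, Finset.mem_Icc] at hm
        obtain ⟨⟨⟨hm1, hmn⟩, hex⟩, hkm⟩ := hm
        simp only [dif_pos hex]
        obtain ⟨hi, hge, hlt⟩ := hex.choose_spec
        have hmk : H (m - 1) ≤ H k := hanti.antitone (by omega)
        exact Finset.mem_filter.mpr ⟨hi, key _ _ (lt_of_lt_of_le hlt hmk)⟩
      · intro m1 hm1 m2 hm2 he
        simp only [hFdef, hP, Finset.coe_filter, Set.mem_setOf_eq,
          Finset.mem_filter, Finset.mem_Icc] at hm1 hm2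
        obtain ⟨⟨⟨hm11, _⟩, hex1⟩, hk1⟩ := hm1
        obtain ⟨⟨⟨hm21, _⟩, hex2⟩, hk2⟩ := hm2
        simp only [dif_pos hex1, dif_pos hex2] at he
        obtain ⟨_, hge1, hlt1⟩ := hex1.choose_spec
        obtain ⟨_, hge2, hlt2⟩ := hex2.choose_spec
        rw [he] at hge1 hlt1
        by_contra hne
        rcases lt_or_gt_of_ne hne with hlt | hlt
        · have : H (m2 - 1) ≤ H m1 := hanti.antitone (by omega)
          linarith
        · have : H (m1 - 1) ≤ H m2 := hanti.antitone (by omega)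
          linarith
    omega
  · -- lower bound
    intro k hk
    have hkappa : k ≤ (rstateAfter ρ H u n).1 := by
      by_contra hc
      push_neg at hc
      have hsub : ((Finset.range n).filter fun i => u i < H k) ⊆
          (Finset.range n).filter fun i => u i < H (rstateAfter ρ H u i).1 := by
        intro i hi
        simp only [Finset.mem_filter, Finset.mem_range] at hi ⊢
        refine ⟨hi.1, lt_of_lt_of_le hi.2 (hanti.antitone ?_)⟩
        have hmono : (rstateAfter ρ H u i).1 ≤ (rstateAfter ρ H u n).1 :=
          fst_mono ρ H u (le_of_lt hi.1)
        omega
      have h3 := Finset.card_le_card hsub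
      rw [repl_count ρ H u hρ n] at h3
      have h4 := snd_lt ρ H u hρ n
      have h5 : ∑ l ∈ Finset.range ((rstateAfter ρ H u n).1 + 1), ρ l ≤
          ∑ l ∈ Finset.range k, ρ l :=
        Finset.sum_le_sum_of_subset (Finset.range_subset_range.mpr (by omega))
      rw [Finset.sum_range_succ] at h5
      omega
    have hsub : Finset.Icc 1 k ⊆ (Finset.Icc 1 n).filter (fun m =>
        ∃ i ∈ Finset.range n, H m ≤ tval ρ H u i ∧ tval ρ H u i < H (m - 1)) := by
      intro m hm
      rw [Finset.mem_Icc] at hm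
      obtain ⟨i, hi, h1, h2⟩ := reach ρ H u n m hm.1 (le_trans hm.2 hkappa)
      have ht : tval ρ H u i = H m := by rw [tval_eq, if_pos h2, h1]
      refine Finset.mem_filter.mpr ⟨Finset.mem_Icc.mpr ⟨hm.1,
        le_trans (le_trans hm.2 hkappa) (fst_le ρ H u n)⟩,
        ⟨i, Finset.mem_range.mpr hi, by rw [ht],
          by rw [ht]; exact hanti (show m - 1 < m by omega)⟩⟩
    calc k = (Finset.Icc 1 k).card := by simp
      _ ≤ _ := Finset.card_le_card hsub
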